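/- arXiv:1702.03434 — 3 statements merged into one kernel-verified Lean document; each statement's English description precedes it below -/
import Mathlib

section
/- For a prime p and a real number α > 0, the integral of |1 − x|_p^(α−1) over the unit sphere {x ∈ ℚ_p : |x|_p = 1} equals (p − 2 + p^(−α)) / (p(1 − p^(−α))). -/
/-!
`ℤ_[p]` is the disjoint union of the `p ^ n` translates `i + p ^ n ℤ_[p]`, `i < p ^ n`, so the
closed ball of radius `p ^ (-n)` has measure `p ^ (-n)`, and the shell `‖x‖ = p ^ (-n)` has measure
`p ^ (-n) (1 - p⁻¹)`. Summing `‖x‖ ^ (α - 1)` over the shells gives the geometric series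
`∫_{ℤ_[p]} ‖x‖ ^ (α - 1) = (1 - p⁻¹) / (1 - p ^ (-α))`. Translation by `1` preserves `ℤ_[p]`, so the
same value is the integral of `‖1 - x‖ ^ (α - 1)` over `ℤ_[p]`; on the open unit ball, of measure
`p⁻¹`, the integrand is `1`, and subtracting leaves the unit sphere.
-/

open MeasureTheory Real Filter

noncomputable instance padicMeasurableSpace (p : ℕ) [Fact p.Prime] : MeasurableSpace ℚ_[p] := borel _
instance padicBorelSpace (p : ℕ) [Fact p.Prime] : BorelSpace ℚ_[p] := ⟨rfl⟩

/-- The Haar measure on `ℚ_[p]` normalized so that the unit ball has measure 1. -/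
noncomputable def padicHaar (p : ℕ) [Fact p.Prime] : Measure ℚ_[p] :=
  Measure.addHaarMeasure
    ⟨⟨Metric.closedBall 0 1, isCompact_closedBall 0 1⟩,
      ⟨0, Metric.ball_subset_interior_closedBall (Metric.mem_ball_self one_pos)⟩⟩

open Metric Set Function
open scoped ENNReal

section Ultrametric

variable {G : Type*} [NormedAddCommGroup G] [IsUltrametricDist G] {a : G} {r : ℝ}

lemma preimage_sub_closedBall_zero_of_norm_le (ha : ‖a‖ ≤ r) :
    (· - a) ⁻¹' closedBall 0 r = closedBall (0 : G) r := by
  ext x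
  rw [mem_preimage, mem_closedBall_zero_iff, ← mem_closedBall_iff_norm,
    ← IsUltrametricDist.closedBall_eq_of_mem (mem_closedBall_zero_iff.2 ha)]

variable [MeasurableSpace G] [BorelSpace G] (μ : Measure G) [μ.IsAddRightInvariant]

lemma integrableOn_closedBall_comp_sub_iff {E : Type*} [NormedAddCommGroup E] (ha : ‖a‖ ≤ r)
    {f : G → E} :
    IntegrableOn (fun x ↦ f (x - a)) (closedBall 0 r) μ ↔
      IntegrableOn f (closedBall 0 r) μ := by
  have h := (measurePreserving_sub_right μ a).integrableOn_comp_preimage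
    (measurableEmbedding_subRight a) (f := f) (s := closedBall 0 r)
  rwa [preimage_sub_closedBall_zero_of_norm_le ha] at h

lemma setIntegral_closedBall_comp_sub {E : Type*} [NormedAddCommGroup E] [NormedSpace ℝ E]
    (ha : ‖a‖ ≤ r) (f : G → E) :
    ∫ x in closedBall 0 r, f (x - a) ∂μ = ∫ x in closedBall 0 r, f x ∂μ := by
  conv_lhs => rw [← preimage_sub_closedBall_zero_of_norm_le ha]
  exact (measurePreserving_sub_right μ a).setIntegral_preimage_emb
    (measurableEmbedding_subRight a) f _

end Ultrametric

namespace Padic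

variable {p : ℕ} [Fact p.Prime]

lemma closedBall_zero_one_eq_biUnion (n : ℕ) :
    closedBall (0 : ℚ_[p]) 1 =
      ⋃ i ∈ Finset.range (p ^ n), closedBall (i : ℚ_[p]) (p ^ (-n : ℤ)) := by
  ext x
  simp only [mem_iUnion, mem_closedBall, dist_eq_norm, sub_zero, Finset.mem_range, exists_prop]
  constructor
  · intro hx
    let z : ℤ_[p] := ⟨x, hx⟩
    refine ⟨z.appr n, z.appr_lt n, ?_⟩
    simpa [PadicInt.norm_def] using (PadicInt.norm_le_pow_iff_mem_span_pow _ n).2 (z.appr_spec n)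
  · rintro ⟨i, -, hi⟩
    calc ‖x‖ = ‖(x - i) + i‖ := by rw [sub_add_cancel]
      _ ≤ max ‖x - i‖ ‖(i : ℚ_[p])‖ := IsUltrametricDist.norm_add_le_max _ _
      _ ≤ 1 := max_le (hi.trans (zpow_le_one_of_nonpos₀ (mod_cast (Fact.out : p.Prime).one_le)
          (by omega))) (by simpa using norm_int_le_one (p := p) i)

lemma pairwiseDisjoint_closedBall_natCast (n : ℕ) :
    (Finset.range (p ^ n) : Set ℕ).PairwiseDisjoint
      (fun i ↦ closedBall (i : ℚ_[p]) (p ^ (-n : ℤ))) := by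
  intro i hi j hj hij
  refine (IsUltrametricDist.closedBall_eq_or_disjoint _ _ _).resolve_left fun h ↦ hij ?_
  have hji : ‖((j - i : ℤ) : ℚ_[p])‖ ≤ (p : ℝ) ^ (-n : ℤ) := by
    have hj := h ▸ mem_closedBall_self (x := (j : ℚ_[p]))
      (by positivity : 0 ≤ (p : ℝ) ^ (-n : ℤ))
    simpa [dist_eq_norm] using hj
  have hlt : |(j - i : ℤ)| < (p ^ n : ℕ) := by
    simp only [Finset.coe_range, mem_Iio] at hi hj
    rw [abs_lt]; omega
  have := Int.eq_zero_of_abs_lt_dvd (by exact_mod_cast (norm_int_le_pow_iff_dvd _ n).1 hji) hlt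
  omega

instance : (padicHaar p).IsAddHaarMeasure := by
  unfold padicHaar; infer_instance

variable (p) in
lemma padicHaar_closedBall_zero_one : padicHaar p (closedBall 0 1) = 1 :=
  Measure.addHaarMeasure_self

lemma padicHaar_closedBall (x : ℚ_[p]) (n : ℕ) :
    padicHaar p (closedBall x (p ^ (-n : ℤ))) = ENNReal.ofReal (p ^ (-n : ℤ)) := by
  have hcover : (p ^ n : ℝ≥0∞) * padicHaar p (closedBall 0 (p ^ (-n : ℤ))) = 1 := by
    rw [← padicHaar_closedBall_zero_one p, closedBall_zero_one_eq_biUnion n,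
      measure_biUnion_finset (pairwiseDisjoint_closedBall_natCast n)
        (fun _ _ ↦ measurableSet_closedBall)]
    simp [Measure.addHaar_closedBall_center]
  rw [Measure.addHaar_closedBall_center,
    ENNReal.eq_inv_of_mul_eq_one_left ((mul_comm _ _).trans hcover), zpow_neg, zpow_natCast,
    ENNReal.ofReal_inv_of_pos (pow_pos (mod_cast (Fact.out : p.Prime).pos) n)]
  norm_cast

lemma ball_zero_zpow (k : ℤ) : ball (0 : ℚ_[p]) (p ^ k) = closedBall 0 (p ^ (k - 1)) := by
  ext x
  simpa using norm_lt_pow_iff_norm_le_pow_sub_one x k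

lemma padicHaar_ball_zero_one : padicHaar p (ball 0 1) = ENNReal.ofReal (p : ℝ)⁻¹ := by
  rw [← zpow_zero (p : ℝ), ball_zero_zpow]
  simpa using padicHaar_closedBall (p := p) 0 1

lemma padicHaar_sphere_zero (n : ℕ) :
    padicHaar p (sphere 0 (p ^ (-n : ℤ))) =
      ENNReal.ofReal (p ^ (-n : ℤ) * (1 - (p : ℝ)⁻¹)) := by
  have hp : (0 : ℝ) < p := by exact_mod_cast (Fact.out : p.Prime).pos
  have hball : ball (0 : ℚ_[p]) (p ^ (-n : ℤ)) = closedBall 0 (p ^ (-(n + 1 : ℕ) : ℤ)) := by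
    rw [ball_zero_zpow]; push_cast; ring_nf
  rw [← closedBall_sdiff_ball,
    measure_sdiff ball_subset_closedBall measurableSet_ball.nullMeasurableSet
      measure_ball_lt_top.ne, hball, padicHaar_closedBall, padicHaar_closedBall,
    ← ENNReal.ofReal_sub _ (by positivity)]
  congr 1
  simp only [zpow_neg, zpow_natCast, pow_succ]
  field_simp

lemma closedBall_zero_one_sdiff_zero :
    closedBall (0 : ℚ_[p]) 1 \ {0} = ⋃ n : ℕ, sphere 0 (p ^ (-n : ℤ)) := by
  ext x
  simp only [Set.mem_sdiff, mem_closedBall_zero_iff, mem_singleton_iff, mem_iUnion,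
    mem_sphere_zero_iff_norm]
  constructor
  · rintro ⟨hx1, hx0⟩
    refine ⟨x.valuation.toNat, ?_⟩
    rw [norm_eq_zpow_neg_valuation hx0, Int.toNat_of_nonneg ((norm_le_one_iff_val_nonneg x).1 hx1)]
  · rintro ⟨n, hn⟩
    refine ⟨hn ▸ zpow_le_one_of_nonpos₀ (mod_cast (Fact.out : p.Prime).one_le) (by omega),
      ?_⟩
    rintro rfl
    rw [norm_zero] at hn
    exact (zpow_pos (by exact_mod_cast (Fact.out : p.Prime).pos) _).ne' hn.symm

lemma pairwise_disjoint_sphere_zero :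
    Pairwise (Disjoint on fun n : ℕ ↦ sphere (0 : ℚ_[p]) (p ^ (-n : ℤ))) := by
  intro m n hmn
  refine disjoint_left.2 fun x hm hn ↦ hmn ?_
  rw [mem_sphere_zero_iff_norm] at hm hn
  have := zpow_right_injective₀ (a := (p : ℝ)) (by exact_mod_cast (Fact.out : p.Prime).pos)
    (by exact_mod_cast (Fact.out : p.Prime).ne_one) (hm.symm.trans hn)
  omega

lemma lintegral_closedBall_zero_one_norm_rpow {α : ℝ} (hα : 0 < α) :
    ∫⁻ x in closedBall (0 : ℚ_[p]) 1, ENNReal.ofReal (‖x‖ ^ (α - 1)) ∂padicHaar p =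
      ENNReal.ofReal ((1 - (p : ℝ)⁻¹) / (1 - (p : ℝ) ^ (-α))) := by
  have hp : (1 : ℝ) < p := by exact_mod_cast (Fact.out : p.Prime).one_lt
  have hr0 : 0 ≤ (p : ℝ) ^ (-α) := by positivity
  have hr1 : (p : ℝ) ^ (-α) < 1 := rpow_lt_one_of_one_lt_of_neg hp (by linarith)
  have hq : 0 ≤ 1 - (p : ℝ)⁻¹ := sub_nonneg.2 (inv_le_one_of_one_le₀ hp.le)
  have hsphere (n : ℕ) :
      ∫⁻ x in sphere 0 (p ^ (-n : ℤ)), ENNReal.ofReal (‖x‖ ^ (α - 1)) ∂padicHaar p =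
        ENNReal.ofReal ((1 - (p : ℝ)⁻¹) * ((p : ℝ) ^ (-α)) ^ n) := by
    have hpn : (0 : ℝ) < p ^ (-n : ℤ) := by positivity
    rw [setLIntegral_congr_fun isClosed_sphere.measurableSet
        (fun x hx ↦ by rw [mem_sphere_zero_iff_norm.1 hx]), setLIntegral_const,
      padicHaar_sphere_zero, ← ENNReal.ofReal_mul (by positivity), ← mul_assoc,
      ← rpow_add_one hpn.ne', sub_add_cancel, ← rpow_intCast, ← rpow_mul (by positivity),
      ← rpow_natCast, ← rpow_mul (by positivity)]
    congr 1
    push_cast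
    ring_nf
  rw [← setLIntegral_congr (sdiff_null_ae_eq_self (measure_singleton 0)),
    closedBall_zero_one_sdiff_zero,
    lintegral_iUnion (fun _ ↦ isClosed_sphere.measurableSet) pairwise_disjoint_sphere_zero]
  simp_rw [hsphere]
  rw [← ENNReal.ofReal_tsum_of_nonneg (fun n ↦ mul_nonneg hq (pow_nonneg hr0 n))
      ((summable_geometric_of_lt_one hr0 hr1).mul_left _),
    tsum_mul_left, tsum_geometric_of_lt_one hr0 hr1, div_eq_mul_inv]

lemma integrableOn_closedBall_zero_one_norm_rpow {α : ℝ} (hα : 0 < α) :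
    IntegrableOn (fun x : ℚ_[p] ↦ ‖x‖ ^ (α - 1)) (closedBall 0 1) (padicHaar p) := by
  refine ⟨(measurable_norm.pow_const _).aestronglyMeasurable, ?_⟩
  rw [hasFiniteIntegral_iff_ofReal (ae_of_all _ fun x ↦ rpow_nonneg (norm_nonneg x) _),
    lintegral_closedBall_zero_one_norm_rpow hα]
  exact ENNReal.ofReal_lt_top

lemma setIntegral_closedBall_zero_one_norm_rpow {α : ℝ} (hα : 0 < α) :
    ∫ x in closedBall (0 : ℚ_[p]) 1, ‖x‖ ^ (α - 1) ∂padicHaar p =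
      (1 - (p : ℝ)⁻¹) / (1 - (p : ℝ) ^ (-α)) := by
  have hp : (1 : ℝ) < p := by exact_mod_cast (Fact.out : p.Prime).one_lt
  rw [integral_eq_lintegral_of_nonneg_ae (ae_of_all _ fun x ↦ rpow_nonneg (norm_nonneg x) _)
      (measurable_norm.pow_const _).aestronglyMeasurable,
    lintegral_closedBall_zero_one_norm_rpow hα, ENNReal.toReal_ofReal]
  exact div_nonneg (sub_nonneg.2 (inv_le_one_of_one_le₀ hp.le))
    (sub_nonneg.2 (rpow_le_one_of_one_le_of_nonpos hp.le (by linarith)))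

lemma integrableOn_closedBall_zero_one_norm_one_sub_rpow {α : ℝ} (hα : 0 < α) :
    IntegrableOn (fun x : ℚ_[p] ↦ ‖1 - x‖ ^ (α - 1)) (closedBall 0 1) (padicHaar p) := by
  simp_rw [norm_sub_rev (1 : ℚ_[p])]
  exact (integrableOn_closedBall_comp_sub_iff _ norm_one.le).2
    (integrableOn_closedBall_zero_one_norm_rpow hα)

lemma setIntegral_closedBall_zero_one_norm_one_sub_rpow {α : ℝ} (hα : 0 < α) :
    ∫ x in closedBall (0 : ℚ_[p]) 1, ‖1 - x‖ ^ (α - 1) ∂padicHaar p =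
      (1 - (p : ℝ)⁻¹) / (1 - (p : ℝ) ^ (-α)) := by
  simp_rw [norm_sub_rev (1 : ℚ_[p])]
  rw [setIntegral_closedBall_comp_sub _ norm_one.le (fun x ↦ ‖x‖ ^ (α - 1)),
    setIntegral_closedBall_zero_one_norm_rpow hα]

lemma setIntegral_ball_zero_one_norm_one_sub_rpow (β : ℝ) :
    ∫ x in ball (0 : ℚ_[p]) 1, ‖1 - x‖ ^ β ∂padicHaar p = (p : ℝ)⁻¹ := by
  have hone (x : ℚ_[p]) (hx : x ∈ ball 0 1) : ‖1 - x‖ = 1 :=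
    (norm_eq_of_norm_sub_lt_left (z1 := (1 : ℚ_[p])) (by simpa using hx)).symm.trans norm_one
  rw [setIntegral_congr_fun measurableSet_ball (g := fun _ ↦ 1)
      fun x hx ↦ by rw [hone x hx, one_rpow],
    setIntegral_const, smul_eq_mul, mul_one, measureReal_def, padicHaar_ball_zero_one,
    ENNReal.toReal_ofReal (by positivity)]

end Padic

open Padic in
theorem integral_sub_norm_rpow_unitSphere (p : ℕ) [Fact p.Prime] (α : ℝ) (hα : 0 < α) :
    ∫ x in {x : ℚ_[p] | ‖x‖ = 1}, ‖1 - x‖ ^ (α - 1) ∂(padicHaar p) =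
      ((p : ℝ) - 2 + (p : ℝ) ^ (-α)) / ((p : ℝ) * (1 - (p : ℝ) ^ (-α))) := by
  have hp : (1 : ℝ) < p := by exact_mod_cast (Fact.out : p.Prime).one_lt
  have hr : 1 - (p : ℝ) ^ (-α) ≠ 0 :=
    (sub_pos.2 (rpow_lt_one_of_one_lt_of_neg hp (by linarith))).ne'
  have hsphere : {x : ℚ_[p] | ‖x‖ = 1} = closedBall 0 1 \ ball 0 1 := by
    ext x; simp
  rw [hsphere, setIntegral_sdiff measurableSet_ball
      (integrableOn_closedBall_zero_one_norm_one_sub_rpow hα) ball_subset_closedBall,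
    setIntegral_closedBall_zero_one_norm_one_sub_rpow hα,
    setIntegral_ball_zero_one_norm_one_sub_rpow]
  field_simp
  ring
end

section
/- Let 0 ≤ β < 1, k ∈ ℕ, α > 1, and ε > 0 with β + ε < 1. Then the integral K_r = ∫_{|t|_p ≤ r^(−1)} (|1 − t|_p^(α−1) − |t|_p^(α−1)) |t|_p^(−β) |log |t|_p|^k dt satisfies K_r = O(r^(β+ε−1)) as r → ∞. -/
open MeasureTheory Real Filter

open scoped ENNReal

variable {p : ℕ} [Fact p.Prime]

instance : (padicHaar p).IsAddLeftInvariant := by unfold padicHaar; infer_instance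
instance : (padicHaar p).IsAddRightInvariant := by unfold padicHaar; infer_instance

lemma meas_ball (c : ℝ) : MeasurableSet {x : ℚ_[p] | ‖x‖ ≤ c} :=
  (isClosed_le continuous_norm continuous_const).measurableSet

lemma padicHaar_unitBall : padicHaar p {x : ℚ_[p] | ‖x‖ ≤ 1} = 1 := by
  have : {x : ℚ_[p] | ‖x‖ ≤ 1} = Metric.closedBall 0 1 := by
    ext x; simp [Metric.mem_closedBall, dist_eq_norm]
  rw [this]
  exact Measure.addHaarMeasure_self

lemma padicHaar_ball_le (n : ℕ) :
    padicHaar p {x : ℚ_[p] | ‖x‖ ≤ (p : ℝ) ^ (-(n:ℤ))} ≤ ENNReal.ofReal ((p:ℝ) ^ (-(n:ℤ))) := by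
  set μ := padicHaar p with hμ
  have hp1 : (1:ℝ) < p := by exact_mod_cast (Fact.out : p.Prime).one_lt
  have hp0 : (0:ℝ) < p := lt_trans one_pos hp1
  have hB : ∀ (j : ℕ) (x : ℚ_[p]),
      x ∈ (fun y => y + (-(j:ℚ_[p]))) ⁻¹' {x : ℚ_[p] | ‖x‖ ≤ (p : ℝ) ^ (-(n:ℤ))} ↔
      ‖x - (j:ℚ_[p])‖ ≤ (p : ℝ) ^ (-(n:ℤ)) := by
    intro j x
    simp [Set.mem_preimage, sub_eq_add_neg]
  have hTmeas : ∀ j : ℕ, MeasurableSet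
      ((fun y => y + (-(j:ℚ_[p]))) ⁻¹' {x : ℚ_[p] | ‖x‖ ≤ (p : ℝ) ^ (-(n:ℤ))}) := fun j =>
    (meas_ball _).preimage (measurable_add_const _)
  have hTμ : ∀ j : ℕ, μ ((fun y => y + (-(j:ℚ_[p]))) ⁻¹' {x : ℚ_[p] | ‖x‖ ≤ (p : ℝ) ^ (-(n:ℤ))})
      = μ {x : ℚ_[p] | ‖x‖ ≤ (p : ℝ) ^ (-(n:ℤ))} := fun j =>
    measure_preimage_add_right μ _ _
  have hdisj : (↑(Finset.range (p ^ n)) : Set ℕ).PairwiseDisjoint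
      (fun j : ℕ => (fun y => y + (-(j:ℚ_[p]))) ⁻¹' {x : ℚ_[p] | ‖x‖ ≤ (p : ℝ) ^ (-(n:ℤ))}) := by
    intro i hi j hj hij
    simp only [Finset.coe_range, Set.mem_Iio] at hi hj
    refine Set.disjoint_left.mpr fun x hxi hxj => ?_
    rw [hB] at hxi hxj
    have key : ‖(Int.cast ((i:ℤ) - (j:ℤ)) : ℚ_[p])‖ ≤ (p:ℝ) ^ (-(n:ℤ)) := by
      have h1 : (Int.cast ((i:ℤ) - (j:ℤ)) : ℚ_[p]) = (x - (j:ℚ_[p])) + (-(x - (i:ℚ_[p]))) := by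
        push_cast; ring
      rw [h1]
      refine le_trans (Padic.nonarchimedean _ _) (max_le hxj ?_)
      rwa [norm_neg]
    rw [Padic.norm_int_le_pow_iff_dvd] at key
    rcases lt_or_gt_of_ne hij with h | h
    · have h2 : ((p:ℤ))^n ∣ ((j:ℤ) - i) := by
        have := dvd_neg.mpr key
        simpa using this
      have h3 := Int.le_of_dvd (by omega) h2
      have h4 : ((p^n : ℕ) : ℤ) ≤ (j:ℤ) - i := by push_cast; push_cast at h3; linarith
      omega
    · have h3 := Int.le_of_dvd (by omega) key
      have h4 : ((p^n : ℕ) : ℤ) ≤ (i:ℤ) - j := by push_cast; push_cast at h3; linarith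
      omega
  have hsub : (⋃ j ∈ Finset.range (p ^ n),
      (fun y => y + (-(j:ℚ_[p]))) ⁻¹' {x : ℚ_[p] | ‖x‖ ≤ (p : ℝ) ^ (-(n:ℤ))}) ⊆
      {x : ℚ_[p] | ‖x‖ ≤ 1} := by
    intro x hx
    simp only [Set.mem_iUnion] at hx
    obtain ⟨j, hj, hxj⟩ := hx
    rw [hB] at hxj
    have h2 : ‖(j:ℚ_[p])‖ ≤ 1 := by
      have := Padic.norm_int_le_one (p := p) (j:ℤ); push_cast at this; exact this
    have h3 : ‖x - (j:ℚ_[p])‖ ≤ 1 := le_trans hxj (by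
      have := zpow_le_zpow_right₀ (le_of_lt hp1) (show -(n:ℤ) ≤ 0 by omega)
      simpa using this)
    calc ‖x‖ = ‖(x - (j:ℚ_[p])) + (j:ℚ_[p])‖ := by ring_nf
      _ ≤ max ‖x - (j:ℚ_[p])‖ ‖(j:ℚ_[p])‖ := Padic.nonarchimedean _ _
      _ ≤ 1 := max_le h3 h2
  have hsum : (p ^ n : ℝ≥0∞) * μ {x : ℚ_[p] | ‖x‖ ≤ (p : ℝ) ^ (-(n:ℤ))} ≤ 1 := by
    have := measure_biUnion_finset (μ := μ) hdisj (fun j _ => hTmeas j)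
    calc (p ^ n : ℝ≥0∞) * μ {x : ℚ_[p] | ‖x‖ ≤ (p : ℝ) ^ (-(n:ℤ))}
        = ∑ j ∈ Finset.range (p ^ n),
            μ ((fun y => y + (-(j:ℚ_[p]))) ⁻¹' {x : ℚ_[p] | ‖x‖ ≤ (p : ℝ) ^ (-(n:ℤ))}) := by
          rw [Finset.sum_congr rfl (fun j _ => hTμ j), Finset.sum_const, Finset.card_range,
            nsmul_eq_mul]
          push_cast
          ring
      _ = μ (⋃ j ∈ Finset.range (p ^ n),
            (fun y => y + (-(j:ℚ_[p]))) ⁻¹' {x : ℚ_[p] | ‖x‖ ≤ (p : ℝ) ^ (-(n:ℤ))}) := this.symm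
      _ ≤ μ {x : ℚ_[p] | ‖x‖ ≤ 1} := measure_mono hsub
      _ = 1 := padicHaar_unitBall
  -- conclude
  have hpn : ((p:ℝ≥0∞) ^ n) ≠ 0 := by
    simp [pow_ne_zero_iff, (Fact.out : p.Prime).ne_zero]
  have hpn' : ((p:ℝ≥0∞) ^ n) ≠ ⊤ := by simp [ENNReal.pow_ne_top]
  have hsum' : μ {x : ℚ_[p] | ‖x‖ ≤ (p : ℝ) ^ (-(n:ℤ))} * ((p:ℝ≥0∞) ^ n) ≤ 1 := by
    rw [mul_comm]; exact hsum
  have := (ENNReal.le_div_iff_mul_le (Or.inl hpn) (Or.inl hpn')).mpr hsum'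
  refine le_trans this ?_
  rw [ENNReal.div_eq_inv_mul, mul_one]
  rw [zpow_neg, ENNReal.ofReal_inv_of_pos (by positivity)]
  rw [← ENNReal.inv_le_inv, inv_inv, inv_inv]
  rw [zpow_natCast, ENNReal.ofReal_pow (le_of_lt hp0)]
  simp

lemma padicHaar_zero_singleton : padicHaar p {(0:ℚ_[p])} = 0 := by
  have hp1 : (1:ℝ) < p := by exact_mod_cast (Fact.out : p.Prime).one_lt
  have hp0 : (0:ℝ) < p := lt_trans one_pos hp1
  have h : ∀ n : ℕ, padicHaar p {(0:ℚ_[p])} ≤ ENNReal.ofReal ((p:ℝ)^(-(n:ℤ))) := fun n =>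
    le_trans (measure_mono (by intro x hx; simp only [Set.mem_singleton_iff] at hx
                               simp only [hx, Set.mem_setOf_eq, norm_zero]; positivity)) (padicHaar_ball_le n)
  have h2 : Tendsto (fun n : ℕ => ENNReal.ofReal ((p:ℝ)^(-(n:ℤ)))) atTop (nhds 0) := by
    have : Tendsto (fun n : ℕ => ((p:ℝ)⁻¹)^n) atTop (nhds 0) :=
      tendsto_pow_atTop_nhds_zero_of_lt_one (by positivity) (by
        rw [inv_lt_one_iff₀]; right; exact hp1)
    have h3 : Tendsto (fun n : ℕ => ENNReal.ofReal (((p:ℝ)⁻¹)^n)) atTop (nhds (ENNReal.ofReal 0)) :=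
      (ENNReal.continuous_ofReal.tendsto 0).comp this
    simpa [zpow_neg, zpow_natCast, inv_pow] using h3
  simpa using ge_of_tendsto' h2 h

lemma ball_diff_zero (m : ℕ) :
    {x : ℚ_[p] | ‖x‖ ≤ (p:ℝ)^(-(m:ℤ))} \ {0} =
      ⋃ n : ℕ, {x : ℚ_[p] | ‖x‖ = (p:ℝ)^(-((m+n:ℕ):ℤ))} := by
  have hp1 : (1:ℝ) < p := by exact_mod_cast (Fact.out : p.Prime).one_lt
  ext x
  simp only [Set.mem_diff, Set.mem_setOf_eq, Set.mem_singleton_iff, Set.mem_iUnion]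
  constructor
  · rintro ⟨hle, hne⟩
    have hv := Padic.norm_eq_zpow_neg_valuation hne
    rw [hv] at hle
    have hmv : (m:ℤ) ≤ x.valuation := by
      have := (zpow_le_zpow_iff_right₀ hp1).mp hle
      omega
    refine ⟨(x.valuation - m).toNat, ?_⟩
    rw [hv]
    congr 1
    omega
  · rintro ⟨n, hn⟩
    constructor
    · rw [hn]
      exact zpow_le_zpow_right₀ (le_of_lt hp1) (by omega)
    · intro h0
      rw [h0, norm_zero] at hn
      have : (0:ℝ) < (p:ℝ)^(-((m+n:ℕ):ℤ)) := by positivity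
      linarith [hn ▸ this]

lemma exists_C (k : ℕ) {pr ε : ℝ} (hp1 : 1 < pr) (hε : 0 < ε) :
    ∃ C : ℝ, 0 < C ∧ ∀ j : ℕ, ((j:ℝ) * Real.log pr)^k ≤ C * pr ^ ((j:ℝ) * ε) := by
  have hp0 : (0:ℝ) < pr := lt_trans one_pos hp1
  have hq1 : (1:ℝ) < pr ^ ε := Real.one_lt_rpow_iff_of_pos hp0 |>.mpr (Or.inl ⟨hp1, hε⟩)
  obtain ⟨C₀, hC₀⟩ := (tendsto_pow_const_div_const_pow_of_one_lt k hq1).bddAbove_range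
  have hC₀mem : ∀ j : ℕ, (j:ℝ)^k / (pr ^ ε)^j ≤ C₀ := fun j => hC₀ (Set.mem_range_self j)
  refine ⟨C₀ * (Real.log pr)^k + 1, ?_, ?_⟩
  · have h0 : (0:ℝ) ≤ C₀ * (Real.log pr)^k := by
      have h1 : (0:ℝ) ≤ C₀ := le_trans (div_nonneg (by positivity) (pow_nonneg (Real.rpow_nonneg (le_of_lt hp0) ε) 1)) (hC₀mem 1)
      have h2 : (0:ℝ) ≤ (Real.log pr)^k := pow_nonneg (le_of_lt (Real.log_pos hp1)) k
      exact mul_nonneg h1 h2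
    linarith
  · intro j
    have hpe : (pr ^ ε)^j = pr ^ ((j:ℝ) * ε) := by
      rw [← Real.rpow_natCast (pr ^ ε) j, ← Real.rpow_mul (le_of_lt hp0), mul_comm]
    have hlog : (0:ℝ) < Real.log pr := Real.log_pos hp1
    have key : (j:ℝ)^k ≤ C₀ * (pr ^ ε)^j := by
      have := hC₀mem j
      have hpos : (0:ℝ) < (pr ^ ε)^j := pow_pos (Real.rpow_pos_of_pos hp0 ε) j
      calc (j:ℝ)^k = ((j:ℝ)^k / (pr ^ ε)^j) * (pr ^ ε)^j := by field_simp
        _ ≤ C₀ * (pr ^ ε)^j := by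
            exact mul_le_mul_of_nonneg_right this (le_of_lt hpos)
    calc ((j:ℝ) * Real.log pr)^k = (j:ℝ)^k * (Real.log pr)^k := mul_pow _ _ _
      _ ≤ (C₀ * (pr ^ ε)^j) * (Real.log pr)^k :=
          mul_le_mul_of_nonneg_right key (pow_nonneg (le_of_lt hlog) k)
      _ = (C₀ * (Real.log pr)^k) * pr ^ ((j:ℝ) * ε) := by rw [hpe]; ring
      _ ≤ (C₀ * (Real.log pr)^k + 1) * pr ^ ((j:ℝ) * ε) := by
          have : (0:ℝ) < pr ^ ((j:ℝ) * ε) := Real.rpow_pos_of_pos hp0 _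
          nlinarith

lemma f_sphere_bound (α β : ℝ) (hα : 1 < α) (k : ℕ) {j : ℕ} (hj : 1 ≤ j)
    {x : ℚ_[p]} (hx : ‖x‖ = (p:ℝ)^(-(j:ℤ))) :
    |(‖1 - x‖ ^ (α - 1) - ‖x‖ ^ (α - 1)) * ‖x‖ ^ (-β) * |Real.log ‖x‖| ^ k| ≤
      (p:ℝ)^((j:ℝ)*β) * ((j:ℝ) * Real.log p)^k := by
  have hp1 : (1:ℝ) < p := by exact_mod_cast (Fact.out : p.Prime).one_lt
  have hp0 : (0:ℝ) < p := lt_trans one_pos hp1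
  have hxlt : ‖x‖ < 1 := by
    rw [hx]
    have : (p:ℝ)^(-(j:ℤ)) < (p:ℝ)^(0:ℤ) := (zpow_lt_zpow_iff_right₀ hp1).mpr (by omega)
    simpa using this
  have h1x : ‖1 - x‖ = 1 := by
    rw [sub_eq_add_neg, Padic.add_eq_max_of_ne (by
      rw [norm_one, norm_neg]; exact ne_of_gt hxlt)]
    rw [norm_one, norm_neg]
    exact max_eq_left hxlt.le
  have fa : |‖1 - x‖ ^ (α - 1) - ‖x‖ ^ (α - 1)| ≤ 1 := by
    rw [h1x, Real.one_rpow]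
    have h1 : 0 ≤ ‖x‖ ^ (α - 1) := Real.rpow_nonneg (norm_nonneg x) _
    have h2 : ‖x‖ ^ (α - 1) ≤ 1 := Real.rpow_le_one (norm_nonneg x) hxlt.le (by linarith)
    rw [abs_le]; constructor <;> linarith
  have fb : ‖x‖ ^ (-β) = (p:ℝ)^((j:ℝ)*β) := by
    rw [hx, ← Real.rpow_intCast (p:ℝ) (-(j:ℤ)), ← Real.rpow_mul hp0.le]
    congr 1; push_cast; ring
  have fc : |Real.log ‖x‖| = (j:ℝ) * Real.log p := by
    rw [hx, Real.log_zpow, abs_mul, abs_of_nonneg (le_of_lt (Real.log_pos hp1))]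
    congr 1
    push_cast
    rw [abs_neg, abs_of_nonneg (by positivity)]
  have hBnn : (0:ℝ) ≤ ‖x‖ ^ (-β) := Real.rpow_nonneg (norm_nonneg x) _
  rw [abs_mul, abs_mul, abs_pow, abs_abs, abs_of_nonneg hBnn, fb, fc]
  have h3 : (0:ℝ) ≤ (p:ℝ)^((j:ℝ)*β) := Real.rpow_nonneg hp0.le _
  have h4 : (0:ℝ) ≤ ((j:ℝ) * Real.log p)^k :=
    pow_nonneg (mul_nonneg (Nat.cast_nonneg j) (le_of_lt (Real.log_pos hp1))) k
  calc |‖1 - x‖ ^ (α - 1) - ‖x‖ ^ (α - 1)| * (p:ℝ)^((j:ℝ)*β) * ((j:ℝ) * Real.log p)^k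
      ≤ 1 * (p:ℝ)^((j:ℝ)*β) * ((j:ℝ) * Real.log p)^k :=
        mul_le_mul_of_nonneg_right (mul_le_mul_of_nonneg_right fa h3) h4
    _ = (p:ℝ)^((j:ℝ)*β) * ((j:ℝ) * Real.log p)^k := by ring

theorem K_r_bigO (p : ℕ) [Fact p.Prime] (α β ε : ℝ) (hα : 1 < α) (hβ0 : 0 ≤ β) (hβ1 : β < 1)
    (k : ℕ) (hε : 0 < ε) (hβε : β + ε < 1) :
    (fun r : ℝ => ∫ t in {t : ℚ_[p] | ‖t‖ ≤ r⁻¹},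
        (‖1 - t‖ ^ (α - 1) - ‖t‖ ^ (α - 1)) * ‖t‖ ^ (-β) * |Real.log ‖t‖| ^ k
        ∂(padicHaar p)) =O[atTop] fun r : ℝ => r ^ (β + ε - 1) := by
  have hp1 : (1:ℝ) < p := by exact_mod_cast (Fact.out : p.Prime).one_lt
  have hp0 : (0:ℝ) < p := lt_trans one_pos hp1
  obtain ⟨C, hC0, hC⟩ := exists_C k hp1 hε
  set q : ℝ := (p:ℝ) ^ (β + ε - 1) with hqdef
  have hq0 : 0 < q := Real.rpow_pos_of_pos hp0 _
  have hq1 : q < 1 := Real.rpow_lt_one_of_one_lt_of_neg hp1 (by linarith)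
  have hqj : ∀ j : ℕ, (p:ℝ)^((j:ℝ)*(β+ε)) * (p:ℝ)^(-(j:ℤ)) = q^j := by
    intro j
    rw [hqdef, ← Real.rpow_intCast (p:ℝ) (-(j:ℤ)), ← Real.rpow_add hp0,
        ← Real.rpow_natCast ((p:ℝ)^(β+ε-1)) j, ← Real.rpow_mul hp0.le]
    congr 1; push_cast; ring
  set f : ℚ_[p] → ℝ :=
    fun t => (‖1 - t‖ ^ (α - 1) - ‖t‖ ^ (α - 1)) * ‖t‖ ^ (-β) * |Real.log ‖t‖| ^ k with hfdef
  have hSmeas : ∀ j : ℕ, MeasurableSet {x : ℚ_[p] | ‖x‖ = (p:ℝ)^(-(j:ℤ))} := fun j =>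
    (isClosed_eq continuous_norm continuous_const).measurableSet
  -- per sphere bound
  have sphere_bound : ∀ j : ℕ, 1 ≤ j →
      ∫⁻ x in {x : ℚ_[p] | ‖x‖ = (p:ℝ)^(-(j:ℤ))}, ENNReal.ofReal ‖f x‖ ∂(padicHaar p)
        ≤ ENNReal.ofReal (C * q^j) := by
    intro j hj
    have step1 : ∫⁻ x in {x : ℚ_[p] | ‖x‖ = (p:ℝ)^(-(j:ℤ))}, ENNReal.ofReal ‖f x‖ ∂(padicHaar p)
        ≤ ∫⁻ _x in {x : ℚ_[p] | ‖x‖ = (p:ℝ)^(-(j:ℤ))},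
            ENNReal.ofReal (C * (p:ℝ)^((j:ℝ)*(β+ε))) ∂(padicHaar p) := by
      refine setLIntegral_mono measurable_const (fun x hx => ?_)
      refine ENNReal.ofReal_le_ofReal ?_
      simp only [Set.mem_setOf_eq] at hx
      have h1 := f_sphere_bound α β hα k hj hx
      have h2 := hC j
      have h3 : (0:ℝ) ≤ (p:ℝ)^((j:ℝ)*β) := Real.rpow_nonneg hp0.le _
      calc ‖f x‖ = |f x| := Real.norm_eq_abs _
        _ ≤ (p:ℝ)^((j:ℝ)*β) * ((j:ℝ) * Real.log p)^k := h1
        _ ≤ (p:ℝ)^((j:ℝ)*β) * (C * (p:ℝ)^((j:ℝ)*ε)) := mul_le_mul_of_nonneg_left h2 h3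
        _ = C * ((p:ℝ)^((j:ℝ)*β) * (p:ℝ)^((j:ℝ)*ε)) := by ring
        _ = C * (p:ℝ)^((j:ℝ)*(β+ε)) := by rw [← Real.rpow_add hp0]; congr 1; ring
    have step2 : (padicHaar p) {x : ℚ_[p] | ‖x‖ = (p:ℝ)^(-(j:ℤ))}
        ≤ ENNReal.ofReal ((p:ℝ)^(-(j:ℤ))) := by
      refine le_trans (measure_mono ?_) (padicHaar_ball_le j)
      intro x hx
      simp only [Set.mem_setOf_eq] at hx ⊢
      exact le_of_eq hx
    calc ∫⁻ x in {x : ℚ_[p] | ‖x‖ = (p:ℝ)^(-(j:ℤ))}, ENNReal.ofReal ‖f x‖ ∂(padicHaar p)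
        ≤ _ := step1
      _ = ENNReal.ofReal (C * (p:ℝ)^((j:ℝ)*(β+ε))) *
            (padicHaar p) {x : ℚ_[p] | ‖x‖ = (p:ℝ)^(-(j:ℤ))} := setLIntegral_const _ _
      _ ≤ ENNReal.ofReal (C * (p:ℝ)^((j:ℝ)*(β+ε))) * ENNReal.ofReal ((p:ℝ)^(-(j:ℤ))) :=
          mul_le_mul_right step2 _
      _ = ENNReal.ofReal (C * q^j) := by
          rw [← ENNReal.ofReal_mul (by positivity)]
          congr 1
          rw [mul_assoc, hqj j]
  rw [Asymptotics.isBigO_iff]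
  refine ⟨C * (1 - q)⁻¹, ?_⟩
  filter_upwards [eventually_ge_atTop (p:ℝ)] with r hr
  have hr1 : (1:ℝ) < r := lt_of_lt_of_le hp1 hr
  have hr0 : (0:ℝ) < r := lt_trans one_pos hr1
  set m : ℕ := ⌈Real.logb p r⌉₊ with hm
  have hlogb : 0 < Real.logb p r := Real.logb_pos hp1 hr1
  have hm1 : 1 ≤ m := Nat.ceil_pos.mpr hlogb
  have hrpm : r ≤ (p:ℝ)^m := by
    calc r = (p:ℝ) ^ (Real.logb p r) := (Real.rpow_logb hp0 (ne_of_gt hp1) hr0).symm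
      _ ≤ (p:ℝ) ^ ((m:ℝ)) := Real.rpow_le_rpow_of_exponent_le hp1.le (Nat.le_ceil _)
      _ = (p:ℝ)^m := Real.rpow_natCast _ _
  have hpm1r : (p:ℝ)^(m-1 : ℕ) < r := by
    have h2 : ((m-1:ℕ):ℝ) < Real.logb p r := Nat.lt_ceil.mp (by omega)
    calc (p:ℝ)^(m-1:ℕ) = (p:ℝ) ^ (((m-1:ℕ):ℝ)) := (Real.rpow_natCast _ _).symm
      _ < (p:ℝ) ^ (Real.logb p r) := Real.rpow_lt_rpow_of_exponent_lt hp1 h2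
      _ = r := Real.rpow_logb hp0 (ne_of_gt hp1) hr0
  have hincl : {t : ℚ_[p] | ‖t‖ ≤ r⁻¹} ⊆ {t : ℚ_[p] | ‖t‖ ≤ (p:ℝ)^(-(m:ℤ))} := by
    intro t ht
    simp only [Set.mem_setOf_eq] at ht ⊢
    rcases eq_or_ne t 0 with h | h
    · rw [h, norm_zero]; positivity
    · have hv := Padic.norm_eq_zpow_neg_valuation h
      have h3 : r ≤ ‖t‖⁻¹ := by
        have h4 := inv_anti₀ (norm_pos_iff.mpr h) ht
        rwa [inv_inv] at h4
      have h4 : ‖t‖⁻¹ = (p:ℝ) ^ (t.valuation) := by rw [hv, ← zpow_neg, neg_neg]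
      have h5 : (p:ℝ)^((m-1:ℕ):ℤ) < (p:ℝ)^(t.valuation) := by
        rw [zpow_natCast]
        exact lt_of_lt_of_le hpm1r (h4 ▸ h3)
      have h6 : ((m-1:ℕ):ℤ) < t.valuation := (zpow_lt_zpow_iff_right₀ hp1).mp h5
      rw [hv]
      refine zpow_le_zpow_right₀ hp1.le ?_
      omega
  have key : ∫⁻ t in {t : ℚ_[p] | ‖t‖ ≤ r⁻¹}, ENNReal.ofReal ‖f t‖ ∂(padicHaar p)
      ≤ ENNReal.ofReal (C * q^m * (1-q)⁻¹) := by
    refine le_trans (lintegral_mono_set hincl) ?_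
    have hae : ({x : ℚ_[p] | ‖x‖ ≤ (p:ℝ)^(-(m:ℤ))} \ {0} : Set ℚ_[p]) =ᵐ[padicHaar p]
        {x : ℚ_[p] | ‖x‖ ≤ (p:ℝ)^(-(m:ℤ))} :=
      MeasureTheory.diff_ae_eq_self.mpr
        (measure_mono_null Set.inter_subset_right padicHaar_zero_singleton)
    rw [← MeasureTheory.setLIntegral_congr hae, ball_diff_zero m,
      lintegral_iUnion (fun n => hSmeas _) (by
        intro a b hab
        simp only [Function.onFun]
        refine Set.disjoint_left.mpr fun x hxa hxb => hab ?_
        simp only [Set.mem_setOf_eq] at hxa hxb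
        have heq : (p:ℝ)^(-((m+a:ℕ):ℤ)) = (p:ℝ)^(-((m+b:ℕ):ℤ)) := hxa.symm.trans hxb
        have hexp : -((m+a:ℕ):ℤ) = -((m+b:ℕ):ℤ) := by
          by_contra hne
          rcases lt_or_gt_of_ne hne with hlt | hlt
          · exact absurd heq (ne_of_lt ((zpow_lt_zpow_iff_right₀ hp1).mpr hlt))
          · exact absurd heq.symm (ne_of_lt ((zpow_lt_zpow_iff_right₀ hp1).mpr hlt))
        omega)]
    have hsummable : Summable (fun n : ℕ => C * q^(m+n)) := by
      have := (summable_geometric_of_lt_one hq0.le hq1).mul_left (C * q^m)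
      refine this.congr (fun n => ?_)
      rw [pow_add]; ring
    calc ∑' n : ℕ, ∫⁻ x in {x : ℚ_[p] | ‖x‖ = (p:ℝ)^(-((m+n:ℕ):ℤ))},
          ENNReal.ofReal ‖f x‖ ∂(padicHaar p)
        ≤ ∑' n : ℕ, ENNReal.ofReal (C * q^(m+n)) :=
          ENNReal.tsum_le_tsum (fun n => sphere_bound (m+n) (by omega))
      _ = ENNReal.ofReal (∑' n : ℕ, C * q^(m+n)) :=
          (ENNReal.ofReal_tsum_of_nonneg (fun n => by positivity) hsummable).symm
      _ = ENNReal.ofReal (C * q^m * (1-q)⁻¹) := by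
          congr 1
          calc ∑' n : ℕ, C * q^(m+n) = ∑' n : ℕ, (C * q^m) * q^n := by
                refine tsum_congr (fun n => ?_); rw [pow_add]; ring
            _ = (C * q^m) * ∑' n : ℕ, q^n := tsum_mul_left
            _ = C * q^m * (1-q)⁻¹ := by rw [tsum_geometric_of_lt_one hq0.le hq1]
  -- conclude
  have hnorm : ‖∫ t in {t : ℚ_[p] | ‖t‖ ≤ r⁻¹}, f t ∂(padicHaar p)‖
      ≤ C * q^m * (1-q)⁻¹ := by
    refine le_trans (norm_integral_le_lintegral_norm f) ?_
    have h7 : (0:ℝ) ≤ C * q^m * (1-q)⁻¹ :=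
      mul_nonneg (mul_nonneg hC0.le (pow_nonneg hq0.le m)) (inv_nonneg.mpr (by linarith))
    calc (∫⁻ t in {t : ℚ_[p] | ‖t‖ ≤ r⁻¹}, ENNReal.ofReal ‖f t‖ ∂(padicHaar p)).toReal
        ≤ (ENNReal.ofReal (C * q^m * (1-q)⁻¹)).toReal :=
          ENNReal.toReal_mono ENNReal.ofReal_ne_top key
      _ = C * q^m * (1-q)⁻¹ := ENNReal.toReal_ofReal h7
  have hqm : q^m ≤ r ^ (β + ε - 1) := by
    have hq' : q^m = ((p:ℝ)^m) ^ (β + ε - 1) := by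
      rw [hqdef, ← Real.rpow_natCast ((p:ℝ)^(β+ε-1)) m, ← Real.rpow_mul hp0.le, mul_comm,
        Real.rpow_mul hp0.le, Real.rpow_natCast]
    rw [hq']
    exact Real.rpow_le_rpow_of_nonpos hr0 hrpm (by linarith)
  calc ‖∫ t in {t : ℚ_[p] | ‖t‖ ≤ r⁻¹}, f t ∂(padicHaar p)‖
      ≤ C * q^m * (1-q)⁻¹ := hnorm
    _ = (C * (1-q)⁻¹) * q^m := by ring
    _ ≤ (C * (1-q)⁻¹) * (r ^ (β + ε - 1)) := by
        refine mul_le_mul_of_nonneg_left hqm ?_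
        have : (0:ℝ) < 1 - q := by linarith
        positivity
    _ = C * (1-q)⁻¹ * ‖r ^ (β + ε - 1)‖ := by
        rw [Real.norm_eq_abs, abs_of_nonneg (Real.rpow_nonneg hr0.le _)]
end

section
/- Let α > 1, M > 1, C > 0, and |x|_p = p^N with N ≥ 0. Then ∫_{1 ≤ |y|_p ≤ |x|_p} (|x − y|_p^(α−1) − |y|_p^(α−1)) |y|_p^(−M) dy ≤ const · |x|_p^(α−1), where the constant depends only on p, α, M. -/
open MeasureTheory Real Filter

open Pointwise

instance padicHaar_inv (p : ℕ) [Fact p.Prime] : (padicHaar p).IsAddLeftInvariant :=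
  Measure.isAddLeftInvariant_addHaarMeasure _

lemma padicHaar_unit (p : ℕ) [Fact p.Prime] : padicHaar p (Metric.closedBall 0 1) = 1 :=
  Measure.addHaarMeasure_self

lemma padic_ball_cover (p : ℕ) [Fact p.Prime] (j : ℕ) :
    Metric.closedBall (0 : ℚ_[p]) ((p:ℝ)^j) ⊆
      ⋃ a ∈ Finset.range (p^j), (((a : ℚ_[p]) / (p:ℚ_[p])^j) +ᵥ Metric.closedBall (0:ℚ_[p]) 1) := by
  intro y hy
  rw [Metric.mem_closedBall, dist_zero_right] at hy
  have hp1 : (1:ℝ) < p := by exact_mod_cast (Fact.out : p.Prime).one_lt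
  have hppos : (0:ℝ) < (p:ℝ)^j := by positivity
  have hpj : ‖((p:ℚ_[p])^j)‖ = ((p:ℝ)^j)⁻¹ := by
    rw [Padic.norm_p_pow, zpow_neg, zpow_natCast]
  have hz : ‖(p:ℚ_[p])^j * y‖ ≤ 1 := by
    rw [norm_mul, hpj]
    calc ((p:ℝ)^j)⁻¹ * ‖y‖ ≤ ((p:ℝ)^j)⁻¹ * (p:ℝ)^j := by
          exact mul_le_mul_of_nonneg_left hy (by positivity)
      _ = 1 := inv_mul_cancel₀ (ne_of_gt hppos)
  set w : ℤ_[p] := ⟨(p:ℚ_[p])^j * y, hz⟩ with hw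
  obtain ⟨u, hu⟩ := Ideal.mem_span_singleton'.mp (PadicInt.appr_spec j w)
  have huQ : (u : ℚ_[p]) * (p:ℚ_[p])^j = (p:ℚ_[p])^j * y - (w.appr j : ℚ_[p]) := by
    have := congrArg (fun z : ℤ_[p] => (z : ℚ_[p])) hu
    push_cast at this
    simpa [hw] using this
  have hpj0 : ((p:ℚ_[p])^j) ≠ 0 := by
    apply pow_ne_zero
    exact_mod_cast (Nat.cast_ne_zero (R := ℚ_[p])).mpr (Fact.out : p.Prime).ne_zero
  have hyu : y - (w.appr j : ℚ_[p]) / (p:ℚ_[p])^j = (u : ℚ_[p]) := by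
    have h2 : (y - (w.appr j : ℚ_[p]) / (p:ℚ_[p])^j) * (p:ℚ_[p])^j = (u : ℚ_[p]) * (p:ℚ_[p])^j := by
      rw [sub_mul, div_mul_cancel₀ _ hpj0]
      linear_combination -huQ
    exact mul_right_cancel₀ hpj0 h2
  refine Set.mem_biUnion (Finset.mem_range.mpr (PadicInt.appr_lt w j)) ?_
  rw [Set.mem_vadd_set_iff_neg_vadd_mem]
  rw [vadd_eq_add, Metric.mem_closedBall, dist_zero_right]
  have : -(↑(w.appr j) / (p:ℚ_[p])^j) + y = (u : ℚ_[p]) := by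
    rw [← hyu]; ring
  rw [this]
  exact u.2

lemma padicHaar_closedBall_le (p : ℕ) [Fact p.Prime] (j : ℕ) :
    padicHaar p (Metric.closedBall (0:ℚ_[p]) ((p:ℝ)^j)) ≤ ((p:ENNReal))^j := by
  calc padicHaar p (Metric.closedBall (0:ℚ_[p]) ((p:ℝ)^j))
      ≤ padicHaar p (⋃ a ∈ Finset.range (p^j),
          (((a : ℚ_[p]) / (p:ℚ_[p])^j) +ᵥ Metric.closedBall (0:ℚ_[p]) 1)) :=
        measure_mono (padic_ball_cover p j)
    _ ≤ ∑ a ∈ Finset.range (p^j),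
          padicHaar p (((a : ℚ_[p]) / (p:ℚ_[p])^j) +ᵥ Metric.closedBall (0:ℚ_[p]) 1) :=
        measure_biUnion_finset_le _ _
    _ = ∑ a ∈ Finset.range (p^j), 1 := by
        refine Finset.sum_congr rfl fun a _ => ?_
        rw [measure_vadd, padicHaar_unit]
    _ = ((p:ENNReal))^j := by
        rw [Finset.sum_const, Finset.card_range, nsmul_eq_mul, mul_one]
        norm_cast

lemma padicShell_measure_le (p : ℕ) [Fact p.Prime] (j : ℕ) :
    padicHaar p {y : ℚ_[p] | ‖y‖ = (p:ℝ)^j} ≤ ((p:ENNReal))^j := by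
  refine (measure_mono ?_).trans (padicHaar_closedBall_le p j)
  intro y hy
  rw [Metric.mem_closedBall, dist_zero_right]
  exact le_of_eq hy

theorem J2_bound (p : ℕ) [Fact p.Prime] (α M : ℝ) (hα : 1 < α) (hM : 1 < M) :
    ∃ K : ℝ, ∀ (N : ℕ) (x : ℚ_[p]), ‖x‖ = (p : ℝ) ^ N →
      ∫ y in {y : ℚ_[p] | 1 ≤ ‖y‖ ∧ ‖y‖ ≤ ‖x‖},
          (‖x - y‖ ^ (α - 1) - ‖y‖ ^ (α - 1)) * ‖y‖ ^ (-M) ∂(padicHaar p)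
        ≤ K * ‖x‖ ^ (α - 1) := by
  have hp1 : (1:ℝ) < p := by exact_mod_cast (Fact.out : p.Prime).one_lt
  have hp0 : (0:ℝ) < p := by linarith
  set r : ℝ := (p:ℝ) ^ (1 - M) with hr
  have hr0 : 0 ≤ r := Real.rpow_nonneg hp0.le _
  have hr1 : r < 1 := Real.rpow_lt_one_of_one_lt_of_neg hp1 (by linarith)
  have hα' : (0:ℝ) ≤ α - 1 := by linarith
  refine ⟨(1 - r)⁻¹, fun N x hx => ?_⟩
  set X : ℝ := ‖x‖ ^ (α - 1) with hX
  have hX0 : 0 ≤ X := Real.rpow_nonneg (norm_nonneg x) _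
  set S : Set ℚ_[p] := {y : ℚ_[p] | 1 ≤ ‖y‖ ∧ ‖y‖ ≤ ‖x‖} with hS
  set T : ℕ → Set ℚ_[p] := fun j => {y : ℚ_[p] | ‖y‖ = (p:ℝ)^j} with hT
  have hSmeas : MeasurableSet S := by
    have : S = norm ⁻¹' (Set.Icc 1 ‖x‖) := rfl
    rw [this]; exact measurable_norm measurableSet_Icc
  have hTmeas : ∀ j, MeasurableSet (T j) := by
    intro j
    have : T j = norm ⁻¹' {(p:ℝ)^j} := rfl
    rw [this]; exact measurable_norm (measurableSet_singleton _)
  have hTμ : ∀ j, padicHaar p (T j) ≤ ((p:ENNReal))^j := fun j => padicShell_measure_le p j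
  have hptop : ∀ j : ℕ, ((p:ENNReal))^j ≠ ⊤ := fun j => ENNReal.pow_ne_top (ENNReal.natCast_ne_top p)
  have hTtoReal : ∀ j, (padicHaar p (T j)).toReal ≤ (p:ℝ)^j := by
    intro j
    have := ENNReal.toReal_mono (hptop j) (hTμ j)
    simpa [ENNReal.toReal_pow] using this
  have hTtop : ∀ j, padicHaar p (T j) ≠ ⊤ := fun j => ne_top_of_le_ne_top (hptop j) (hTμ j)
  have hSμ : padicHaar p S ≠ ⊤ := by
    refine ne_top_of_le_ne_top (hptop N) ((measure_mono ?_).trans (padicHaar_closedBall_le p N))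
    intro y hy
    rw [Metric.mem_closedBall, dist_zero_right]
    exact hy.2.trans_eq hx
  -- the continuous substitute for the integrand
  set h' : ℚ_[p] → ℝ := fun y => (max ‖y‖ 1) ^ (-M) with hh'
  have hmaxpos : ∀ y : ℚ_[p], (0:ℝ) < max ‖y‖ 1 := fun y => lt_of_lt_of_le one_pos (le_max_right _ _)
  have hh'cont : Continuous h' := by
    rw [continuous_iff_continuousAt]
    intro y
    exact ((continuous_norm.max continuous_const).continuousAt).rpow_const (Or.inl (ne_of_gt (hmaxpos y)))
  have hh'01 : ∀ y : ℚ_[p], 0 ≤ h' y ∧ h' y ≤ 1 := fun y =>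
    ⟨Real.rpow_nonneg (hmaxpos y).le _,
     Real.rpow_le_one_of_one_le_of_nonpos (le_max_right _ _) (by linarith)⟩
  set f' : ℚ_[p] → ℝ := fun y => (‖x - y‖ ^ (α - 1) - ‖y‖ ^ (α - 1)) * h' y with hf'
  have hf'cont : Continuous f' := by
    refine Continuous.mul (Continuous.sub ?_ ?_) hh'cont
    · exact (Real.continuous_rpow_const hα').comp (continuous_const.sub continuous_id).norm
    · exact (Real.continuous_rpow_const hα').comp continuous_norm
  have hEq : Set.EqOn (fun y : ℚ_[p] => (‖x - y‖ ^ (α - 1) - ‖y‖ ^ (α - 1)) * ‖y‖ ^ (-M)) f' S := by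
    intro y hy
    simp only [hf', hh', max_eq_left hy.1]
  -- pointwise facts on S
  have hfacts : ∀ y ∈ S, ‖x - y‖ ^ (α - 1) ≤ X ∧ ‖y‖ ^ (α - 1) ≤ X := by
    intro y hy
    have hxy : ‖x - y‖ ≤ ‖x‖ := by
      rw [sub_eq_add_neg]
      refine (Padic.nonarchimedean x (-y)).trans ?_
      rw [norm_neg]
      exact max_le le_rfl hy.2
    exact ⟨Real.rpow_le_rpow (norm_nonneg _) hxy hα',
           Real.rpow_le_rpow (norm_nonneg _) hy.2 hα'⟩
  have hf'int : IntegrableOn f' S (padicHaar p) := by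
    refine Measure.integrableOn_of_bounded hSμ hf'cont.aestronglyMeasurable ?_ (M := X)
    filter_upwards [ae_restrict_mem hSmeas] with y hy
    obtain ⟨hA, hB⟩ := hfacts y hy
    have hA0 : 0 ≤ ‖x - y‖ ^ (α - 1) := Real.rpow_nonneg (norm_nonneg _) _
    have hB0 : 0 ≤ ‖y‖ ^ (α - 1) := Real.rpow_nonneg (norm_nonneg _) _
    obtain ⟨hc0, hc1⟩ := hh'01 y
    rw [Real.norm_eq_abs, abs_mul, abs_of_nonneg hc0]
    have habs : |‖x - y‖ ^ (α - 1) - ‖y‖ ^ (α - 1)| ≤ X := abs_sub_le_iff.mpr ⟨by linarith, by linarith⟩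
    calc |‖x - y‖ ^ (α - 1) - ‖y‖ ^ (α - 1)| * h' y ≤ X * 1 :=
          mul_le_mul habs hc1 hc0 hX0
      _ = X := mul_one X
  have hg'int : IntegrableOn (fun y => X * h' y) S (padicHaar p) := by
    refine Measure.integrableOn_of_bounded hSμ (continuous_const.mul hh'cont).aestronglyMeasurable ?_ (M := X)
    filter_upwards with y
    obtain ⟨hc0, hc1⟩ := hh'01 y
    rw [Real.norm_eq_abs, abs_mul, abs_of_nonneg hc0, abs_of_nonneg hX0]
    calc X * h' y ≤ X * 1 := mul_le_mul_of_nonneg_left hc1 hX0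
      _ = X := mul_one X
  have hh'int : ∀ j, IntegrableOn h' (T j) (padicHaar p) := by
    intro j
    refine Measure.integrableOn_of_bounded (hTtop j) hh'cont.aestronglyMeasurable ?_ (M := 1)
    filter_upwards with y
    obtain ⟨hc0, hc1⟩ := hh'01 y
    rwa [Real.norm_eq_abs, abs_of_nonneg hc0]
  -- decomposition of S into shells
  have hS_eq : S = ⋃ j ∈ Finset.range (N+1), T j := by
    ext y
    simp only [hS, hT, Set.mem_setOf_eq, Set.mem_iUnion, Finset.mem_range, exists_prop]
    constructor
    · rintro ⟨h1, h2⟩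
      have hy0 : y ≠ 0 := by
        intro h
        rw [h, norm_zero] at h1
        linarith
      have hval := Padic.norm_eq_zpow_neg_valuation hy0
      have hk0 : (0:ℤ) ≤ -y.valuation := by
        rw [hval] at h1
        have : (p:ℝ)^(0:ℤ) ≤ (p:ℝ)^(-y.valuation) := by rwa [zpow_zero]
        exact (zpow_le_zpow_iff_right₀ hp1).mp this
      have hkN : -y.valuation ≤ (N:ℤ) := by
        rw [hval, hx] at h2
        have : (p:ℝ)^(-y.valuation) ≤ (p:ℝ)^((N:ℕ):ℤ) := by rwa [zpow_natCast]
        exact (zpow_le_zpow_iff_right₀ hp1).mp this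
      refine ⟨(-y.valuation).toNat, by omega, ?_⟩
      rw [hval, ← zpow_natCast]
      congr 1
      omega
    · rintro ⟨j, hj, hyj⟩
      rw [hyj, hx]
      exact ⟨one_le_pow₀ hp1.le, pow_le_pow_right₀ hp1.le (by omega)⟩
  have hdisj : Set.Pairwise ↑(Finset.range (N+1)) (Function.onFun Disjoint T) := by
    intro i _ j _ hij
    refine Set.disjoint_left.mpr fun y hyi hyj => hij ?_
    exact pow_right_injective₀ hp0 (ne_of_gt hp1) (hyi.symm.trans hyj)
  -- the exponent computation
  have hrj : ∀ j : ℕ, (p:ℝ)^j * ((p:ℝ)^j) ^ (-M) = r ^ j := by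
    intro j
    calc (p:ℝ)^j * ((p:ℝ)^j) ^ (-M)
        = (p:ℝ)^(j:ℝ) * ((p:ℝ)^(j:ℝ)) ^ (-M) := by rw [Real.rpow_natCast]
      _ = (p:ℝ)^(j:ℝ) * (p:ℝ)^((j:ℝ) * (-M)) := by rw [← Real.rpow_mul hp0.le]
      _ = (p:ℝ)^((j:ℝ) + (j:ℝ) * (-M)) := (Real.rpow_add hp0 _ _).symm
      _ = (p:ℝ)^((1-M) * (j:ℝ)) := by ring_nf
      _ = ((p:ℝ)^(1-M)) ^ (j:ℝ) := Real.rpow_mul hp0.le _ _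
      _ = r ^ j := by rw [hr, Real.rpow_natCast]
  -- the shell integrals
  have hshell : ∀ j, ∫ y in T j, h' y ∂(padicHaar p) ≤ r ^ j := by
    intro j
    have hEqj : Set.EqOn h' (fun _ => ((p:ℝ)^j) ^ (-M)) (T j) := by
      intro y hy
      simp only [hh']
      rw [show ‖y‖ = (p:ℝ)^j from hy, max_eq_left (one_le_pow₀ hp1.le)]
    rw [setIntegral_congr_fun (hTmeas j) hEqj, setIntegral_const, smul_eq_mul]
    have hc0 : (0:ℝ) ≤ ((p:ℝ)^j) ^ (-M) := Real.rpow_nonneg (by positivity) _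
    calc (padicHaar p (T j)).toReal * ((p:ℝ)^j) ^ (-M)
        ≤ (p:ℝ)^j * ((p:ℝ)^j) ^ (-M) := mul_le_mul_of_nonneg_right (hTtoReal j) hc0
      _ = r ^ j := hrj j
  -- putting it together
  have hmain : ∫ y in S, h' y ∂(padicHaar p) ≤ (1 - r)⁻¹ := by
    rw [hS_eq, integral_biUnion_finset _ (fun j _ => hTmeas j) hdisj (fun j _ => hh'int j)]
    calc ∑ j ∈ Finset.range (N+1), ∫ y in T j, h' y ∂(padicHaar p)
        ≤ ∑ j ∈ Finset.range (N+1), r ^ j := Finset.sum_le_sum fun j _ => hshell j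
      _ ≤ ∑' j : ℕ, r ^ j := Summable.sum_le_tsum _ (fun j _ => pow_nonneg hr0 j)
            (summable_geometric_of_lt_one hr0 hr1)
      _ = (1 - r)⁻¹ := tsum_geometric_of_lt_one hr0 hr1
  calc ∫ y in S, (‖x - y‖ ^ (α - 1) - ‖y‖ ^ (α - 1)) * ‖y‖ ^ (-M) ∂(padicHaar p)
      = ∫ y in S, f' y ∂(padicHaar p) := setIntegral_congr_fun hSmeas hEq
    _ ≤ ∫ y in S, X * h' y ∂(padicHaar p) := by
        refine setIntegral_mono_on hf'int hg'int hSmeas fun y hy => ?_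
        obtain ⟨hA, hB⟩ := hfacts y hy
        have hB0 : 0 ≤ ‖y‖ ^ (α - 1) := Real.rpow_nonneg (norm_nonneg _) _
        exact mul_le_mul_of_nonneg_right (by linarith) (hh'01 y).1
    _ = X * ∫ y in S, h' y ∂(padicHaar p) := integral_const_mul X _
    _ ≤ X * (1 - r)⁻¹ := mul_le_mul_of_nonneg_left hmain hX0
    _ = (1 - r)⁻¹ * ‖x‖ ^ (α - 1) := by rw [mul_comm, hX]
end
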